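/- arXiv:1805.06445 — 2 statements merged into one kernel-verified Lean document; each statement's English description precedes it below -/
import Mathlib

section
/- A fixed point x* of the SINDy scheme is a local minimizer of F(x) = ‖Ax−b‖₂² + λ²‖x‖₀: there exists ε > 0 such that F(x* + z) ≥ F(x*) for all z with ‖z‖_∞ < ε. -/
open Matrix
open scoped Matrix.Norms.L2Operator

/-- The ℓ² norm of a vector. -/
noncomputable def nrm {ι : Type*} [Fintype ι] (v : ι → ℝ) : ℝ :=
  Real.sqrt (∑ i, v i ^ 2)

/-- The support of a vector, as a `Finset`. -/
noncomputable def spt {n : ℕ} (x : Fin n → ℝ) : Finset (Fin n) :=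
  Finset.univ.filter (fun j => x j ≠ 0)

lemma nrm_eq_norm {k : Type*} [Fintype k] (v : k → ℝ) :
    nrm v = ‖(EuclideanSpace.equiv k ℝ).symm v‖ := by
  rw [nrm, EuclideanSpace.norm_eq]
  congr 1
  refine Finset.sum_congr rfl fun i _ => ?_
  simp [Real.norm_eq_abs, sq_abs]

lemma nrm_nonneg {k : Type*} [Fintype k] (v : k → ℝ) : 0 ≤ nrm v :=
  Real.sqrt_nonneg _

lemma nrm_triangle {k : Type*} [Fintype k] (u v : k → ℝ) :
    nrm (u + v) ≤ nrm u + nrm v := by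
  rw [nrm_eq_norm, nrm_eq_norm, nrm_eq_norm]
  rw [map_add]
  exact norm_add_le _ _

/-- A fixed point `x*` of the SINDy scheme is a local minimizer of
`F x = ‖Ax−b‖₂² + λ²‖x‖₀`: there is `ε > 0` with `F (x* + z) ≥ F x*` whenever
`‖z‖_∞ < ε`. -/
theorem sindy_fixed_point_is_local_min {m n : ℕ} (hmn : n ≤ m)
    (A : Matrix (Fin m) (Fin n) ℝ) (hrank : A.rank = n) (hA : ‖A‖ = 1)
    (b : Fin m → ℝ) (lam : ℝ) (hlam : 0 < lam)
    (xstar : Fin n → ℝ)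
    (hfix1 : spt xstar = Finset.univ.filter (fun j => lam ≤ |xstar j|))
    (hfix2 : ∀ y : Fin n → ℝ, spt y ⊆ spt xstar →
      nrm (A *ᵥ xstar - b) ≤ nrm (A *ᵥ y - b))
    (F : (Fin n → ℝ) → ℝ)
    (hF : ∀ y, F y = nrm (A *ᵥ y - b) ^ 2 + lam ^ 2 * (spt y).card) :
    ∃ ε > 0, ∀ z : Fin n → ℝ, (∀ j, |z j| < ε) → F xstar ≤ F (xstar + z) := by
  set r := nrm (A *ᵥ xstar - b) with hr
  have hr0 : 0 ≤ r := nrm_nonneg _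
  have hD : (0:ℝ) < 2 * (r + 1) * (n + 1) := by positivity
  refine ⟨min lam (lam ^ 2 / (2 * (r + 1) * (n + 1))),
    lt_min hlam (div_pos (pow_pos hlam 2) hD), ?_⟩
  set ε := min lam (lam ^ 2 / (2 * (r + 1) * (n + 1))) with hε
  have hε0 : 0 < ε := lt_min hlam (div_pos (pow_pos hlam 2) hD)
  intro z hz
  -- the support of xstar is contained in that of xstar + z
  have hsub : spt xstar ⊆ spt (xstar + z) := by
    intro j hj
    have hlj : lam ≤ |xstar j| := by
      rw [hfix1] at hj
      exact (Finset.mem_filter.mp hj).2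
    have hzj : |z j| < lam := lt_of_lt_of_le (hz j) (min_le_left _ _)
    simp only [spt, Finset.mem_filter, Finset.mem_univ, true_and, Pi.add_apply]
    intro h
    have : z j = -xstar j := by linarith [h]
    rw [this, abs_neg] at hzj
    linarith
  by_cases hcase : spt (xstar + z) ⊆ spt xstar
  · -- supports are equal
    have hseq : spt (xstar + z) = spt xstar := le_antisymm hcase hsub
    have hnle : r ≤ nrm (A *ᵥ (xstar + z) - b) := hfix2 _ hcase
    rw [hF, hF, hseq, ← hr]
    have : r ^ 2 ≤ nrm (A *ᵥ (xstar + z) - b) ^ 2 := by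
      apply pow_le_pow_left₀ hr0 hnle
    linarith
  · -- support strictly grows
    have hss : spt xstar ⊂ spt (xstar + z) :=
      HasSubset.Subset.ssubset_of_ne hsub (fun h => hcase (le_of_eq h.symm))
    have hcard : (spt xstar).card + 1 ≤ (spt (xstar + z)).card :=
      Finset.card_lt_card hss
    set R := nrm (A *ᵥ (xstar + z) - b) with hR
    have hR0 : 0 ≤ R := nrm_nonneg _
    set d := nrm (A *ᵥ z) with hd
    have hd0 : 0 ≤ d := nrm_nonneg _
    -- triangle inequality: r ≤ R + d
    have htri : r ≤ R + d := by
      have heq : A *ᵥ xstar - b = (A *ᵥ (xstar + z) - b) + (-(A *ᵥ z)) := by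
        rw [mulVec_add]; abel
      have hneg : nrm (-(A *ᵥ z)) = d := by
        rw [hd, nrm, nrm]
        congr 1
        exact Finset.sum_congr rfl fun i _ => by simp [neg_pow]
      calc r = nrm ((A *ᵥ (xstar + z) - b) + (-(A *ᵥ z))) := by rw [hr, heq]
        _ ≤ R + nrm (-(A *ᵥ z)) := nrm_triangle _ _
        _ = R + d := by rw [hneg]
    -- bound on d
    have hdle : d ≤ (n + 1) * ε := by
      have h1 : d ≤ ‖A‖ * nrm z := by
        rw [hd, nrm_eq_norm, nrm_eq_norm]
        exact A.l2_opNorm_mulVec _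
      rw [hA, one_mul] at h1
      have h2 : nrm z ≤ (n + 1) * ε := by
        rw [nrm]
        have hsum : ∑ i, z i ^ 2 ≤ ((n + 1) * ε) ^ 2 := by
          calc ∑ i, z i ^ 2 ≤ ∑ _i : Fin n, ε ^ 2 := by
                refine Finset.sum_le_sum fun i _ => ?_
                have := (hz i).le
                nlinarith [abs_nonneg (z i), sq_abs (z i)]
            _ = n * ε ^ 2 := by simp [mul_comm]
            _ ≤ ((n + 1) * ε) ^ 2 := by nlinarith [hε0.le, Nat.cast_nonneg (α := ℝ) n]
        calc Real.sqrt (∑ i, z i ^ 2) ≤ Real.sqrt (((n + 1) * ε) ^ 2) :=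
              Real.sqrt_le_sqrt hsum
          _ = (n + 1) * ε := Real.sqrt_sq (by positivity)
      linarith
    -- 2rd ≤ lam²
    have hεle : ε * (2 * (r + 1) * (n + 1)) ≤ lam ^ 2 := by
      have := min_le_right lam (lam ^ 2 / (2 * (r + 1) * (n + 1)))
      rw [← hε] at this
      calc ε * (2 * (r + 1) * (n + 1)) ≤ (lam ^ 2 / (2 * (r + 1) * (n + 1))) * (2 * (r + 1) * (n + 1)) := by
            exact mul_le_mul_of_nonneg_right this hD.le
        _ = lam ^ 2 := by field_simp
    have hkey : 2 * r * d ≤ lam ^ 2 := by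
      have hn0 : (0:ℝ) ≤ (n:ℝ) := Nat.cast_nonneg n
      nlinarith [mul_le_mul_of_nonneg_left hdle (by linarith : (0:ℝ) ≤ 2 * r)]
    -- r² ≤ R² + 2rd
    have hsq : r ^ 2 ≤ R ^ 2 + 2 * r * d := by
      rcases le_or_gt d r with h | h
      · nlinarith [pow_le_pow_left₀ (by linarith : (0:ℝ) ≤ r - d) (by linarith : r - d ≤ R) 2]
      · nlinarith
    rw [hF, hF, ← hr, ← hR]
    have hc : ((spt xstar).card : ℝ) + 1 ≤ ((spt (xstar + z)).card : ℝ) := by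
      exact_mod_cast hcard
    nlinarith [sq_nonneg lam]
end

section
/- Any global minimizer x^g of F(x) = ‖Ax−b‖₂² + λ²‖x‖₀ satisfies: |a_jᵀ(Ax^g − b)| ≤ λ for all j with x^g_j = 0, and |x^g_j| ≥ λ with a_jᵀ(Ax^g − b) = 0 for all j with x^g_j ≠ 0, where a_j is the j-th column of A. -/
open Matrix
open scoped Matrix.Norms.L2Operator

lemma nrm_sq {ι : Type*} [Fintype ι] (v : ι → ℝ) : nrm v ^ 2 = ∑ i, v i ^ 2 :=
  Real.sq_sqrt (Finset.sum_nonneg fun i _ => sq_nonneg _)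

lemma col_norm_sq_le {m n : ℕ} (A : Matrix (Fin m) (Fin n) ℝ) (hA : ‖A‖ = 1) (j : Fin n) :
    ∑ i, (A i j)^2 ≤ 1 := by
  have hx : ((EuclideanSpace.single j (1:ℝ) : EuclideanSpace ℝ (Fin n)) : Fin n → ℝ)
      = Pi.single j 1 := by
    funext k; simp [EuclideanSpace.single_apply, Pi.single_apply]
  have h := A.l2_opNorm_mulVec (EuclideanSpace.single j (1:ℝ))
  rw [EuclideanSpace.norm_single, hA, norm_one, one_mul] at h
  have h2 : ‖(EuclideanSpace.equiv (Fin m) ℝ).symm (A *ᵥ (EuclideanSpace.single j (1:ℝ)))‖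
      = Real.sqrt (∑ i, (A i j)^2) := by
    rw [EuclideanSpace.norm_eq]
    congr 1
    apply Finset.sum_congr rfl
    intro i _
    have : (A *ᵥ (EuclideanSpace.single j (1:ℝ) : EuclideanSpace ℝ (Fin n))) i = A i j := by
      show (A *ᵥ ((EuclideanSpace.single j (1:ℝ) : EuclideanSpace ℝ (Fin n)) : Fin n → ℝ)) i = A i j
      rw [hx]; simp
    simp [this, Real.norm_eq_abs, sq_abs]
  rw [h2] at h
  have hs0 : (0:ℝ) ≤ ∑ i, (A i j)^2 := Finset.sum_nonneg fun i _ => sq_nonneg _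
  nlinarith [Real.sq_sqrt hs0, Real.sqrt_nonneg (∑ i, (A i j)^2)]

set_option maxHeartbeats 1000000 in
/-- (Tropp) Any global minimizer `x^g` of
`F x = ‖Ax−b‖₂² + λ²‖x‖₀` satisfies: `|a_jᵀ(Ax^g−b)| ≤ λ` for all `j` with `x^g_j = 0`,
and `|x^g_j| ≥ λ` with `a_jᵀ(Ax^g−b) = 0` for all `j` with `x^g_j ≠ 0`. -/
theorem global_min_characterization {m n : ℕ}
    (A : Matrix (Fin m) (Fin n) ℝ) (hA : ‖A‖ = 1)
    (b : Fin m → ℝ) (lam : ℝ) (hlam : 0 < lam)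
    (F : (Fin n → ℝ) → ℝ)
    (hF : ∀ y, F y = nrm (A *ᵥ y - b) ^ 2 + lam ^ 2 * (spt y).card)
    (xg : Fin n → ℝ) (hglobal : ∀ y : Fin n → ℝ, F xg ≤ F y) :
    ∀ j : Fin n,
      (xg j = 0 → |∑ i, A i j * (A *ᵥ xg - b) i| ≤ lam) ∧
      (xg j ≠ 0 → lam ≤ |xg j| ∧ ∑ i, A i j * (A *ᵥ xg - b) i = 0) := by
  intro j
  set r : Fin m → ℝ := A *ᵥ xg - b with hr
  set c : ℝ := ∑ i, A i j * r i with hc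
  set s : ℝ := ∑ i, (A i j)^2 with hsdef
  have hs0 : (0:ℝ) ≤ s := Finset.sum_nonneg fun i _ => sq_nonneg _
  have hs1 : s ≤ 1 := col_norm_sq_le A hA j
  -- expansion of the residual norm under a one-coordinate perturbation
  have key : ∀ t : ℝ,
      nrm (A *ᵥ (xg + t • (Pi.single j 1 : Fin n → ℝ)) - b) ^ 2 = nrm r ^ 2 + 2*t*c + t^2*s := by
    intro t
    have h1 : A *ᵥ (xg + t • (Pi.single j 1 : Fin n → ℝ)) - b = fun i => r i + t * A i j := by
      funext i
      simp [Matrix.mulVec_add, Matrix.mulVec_smul, Matrix.mulVec_single, hr]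
      ring
    rw [h1, nrm_sq, nrm_sq, hc, hsdef, Finset.mul_sum, Finset.mul_sum,
      ← Finset.sum_add_distrib, ← Finset.sum_add_distrib]
    apply Finset.sum_congr rfl
    intro i _
    ring
  clear_value r c s
  constructor
  · -- case xg j = 0
    intro hxj
    by_cases hcz : c = 0
    · rw [hcz]; simpa using hlam.le
    -- perturb with t = -c
    set y : Fin n → ℝ := xg + (-c) • (Pi.single j 1 : Fin n → ℝ) with hy
    clear_value y
    have hcard : (spt y).card = (spt xg).card + 1 := by
      have hjny : j ∉ spt xg := by simp [spt, hxj]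
      have hset : spt y = insert j (spt xg) := by
        ext k
        by_cases hk : k = j
        · subst hk
          simp [spt, hy, hxj, hcz]
        · simp [spt, hy, hk, Pi.single_apply]
      rw [hset, Finset.card_insert_of_notMem hjny]
    have hg := hglobal y
    rw [hF, hF, hcard] at hg
    rw [hy, key (-c), ← hr] at hg
    push_cast at hg
    have hc2 : c^2 ≤ lam^2 := by nlinarith [sq_nonneg c]
    rw [abs_le]
    constructor <;> nlinarith [hc2, sq_nonneg (c + lam), sq_nonneg (c - lam)]
  · -- case xg j ≠ 0
    intro hxj
    have hcz : c = 0 := by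
      by_contra hcne
      have hcpos : 0 < |c| := abs_pos.mpr hcne
      set δ : ℝ := min 1 (|xg j| / (2 * |c|)) with hδ
      have hδ0 : 0 < δ := lt_min one_pos (div_pos (abs_pos.mpr hxj) (by positivity))
      have hδ1 : δ ≤ 1 := min_le_left _ _
      set t : ℝ := -c * δ with ht
      have htlt : |t| < |xg j| := by
        have h1 : |t| = |c| * δ := by
          rw [ht, abs_mul, abs_neg, abs_of_pos hδ0]
        have h2 : δ ≤ |xg j| / (2 * |c|) := min_le_right _ _
        have h3 : |c| * δ ≤ |xg j| / 2 := by
          calc |c| * δ ≤ |c| * (|xg j| / (2 * |c|)) :=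
                mul_le_mul_of_nonneg_left h2 (abs_nonneg _)
            _ = |xg j| / 2 := by field_simp
        have h4 : 0 < |xg j| := abs_pos.mpr hxj
        linarith [h1, h3]
      have hne : xg j + t ≠ 0 := by
        intro h
        have : t = -xg j := by linarith
        rw [this, abs_neg] at htlt
        exact lt_irrefl _ htlt
      set y : Fin n → ℝ := xg + t • (Pi.single j 1 : Fin n → ℝ) with hy
      clear_value y
      have hset : spt y = spt xg := by
        ext k
        by_cases hk : k = j
        · subst hk
          simp [spt, hy, hxj, hne]
        · simp [spt, hy, hk, Pi.single_apply]
      have hg := hglobal y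
      rw [hF, hF, hset] at hg
      rw [hy, key t, ← hr] at hg
      have hineq : 0 ≤ 2*t*c + t^2*s := by linarith
      have hts : t^2*s ≤ t^2 := by nlinarith [sq_nonneg t]
      have ht2 : t^2 = δ^2 * c^2 := by rw [ht]; ring
      have htc : 2*t*c = -2*δ*c^2 := by rw [ht]; ring
      have hcc : 0 < c^2 := by positivity
      have hstep : δ^2 * c^2 ≤ δ * c^2 := by nlinarith [mul_nonneg (mul_nonneg (by linarith : (0:ℝ) ≤ 1 - δ) hδ0.le) hcc.le]
      nlinarith [mul_pos hδ0 hcc]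
    refine ⟨?_, hcz⟩
    -- take t = -xg j, removing coordinate j
    set y : Fin n → ℝ := xg + (-xg j) • (Pi.single j 1 : Fin n → ℝ) with hy
    clear_value y
    have hjm : j ∈ spt xg := by simp [spt, hxj]
    have hset : spt y = (spt xg).erase j := by
      ext k
      by_cases hk : k = j
      · subst hk
        simp [spt, hy]
      · simp [spt, hy, hk, Pi.single_apply]
    have hg := hglobal y
    rw [hF, hF, hset] at hg
    rw [hy, key (-xg j), hcz, ← hr] at hg
    have hcard : (((spt xg).card : ℝ)) = ((spt xg).erase j).card + 1 := by
      exact_mod_cast (Finset.card_erase_add_one hjm).symm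
    rw [hcard] at hg
    ring_nf at hg
    have h1 : lam^2 ≤ (xg j)^2 * s := by nlinarith [hg]
    have h2 : lam^2 ≤ (xg j)^2 := by nlinarith [sq_nonneg (xg j), h1, hs1, hs0]
    nlinarith [abs_nonneg (xg j), sq_abs (xg j), h2, hlam]
end
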